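/- If G is a unicyclic graph with n ≥ 4 vertices and a > 1 or 0 < a ≤ e^{-2}, then 2na² ≤ Σ_{u ∈ V(G)} d_u·a^{d_u} ≤ (n-1)a^{n-1} + 4a² + (n-3)a. The lower bound is attained if and only if G = C_n and the upper bound if and only if G = U_n^3. -/

import Mathlib

/-!
Write `f d = d * a ^ d`. When `a > 1` or `3 * a < 1` (in particular when `a ≤ e⁻²`) the increments
of `f` strictly increase from `d = 1` on: the second difference at `d` is
`a ^ d * ((d - 1) * (a - 1) ^ 2 + (a - 1) * (3 * a - 1))`. Subtracting from `f` its chord through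
`d = 1, 2` leaves a function `g` with `g 1 = g 2 = 0` whose increments differ from those of `f` by
a constant, hence `g ≥ 0` on `d ≥ 1` and `g > 0` on `d ≥ 3`. Since the degrees of a unicyclic
graph sum to `2 n`, `SEI_a G = n * f 2 + ∑ g (d u)`. So `SEI_a G ≥ 2 n a²`, with equality iff every degree is `2`, i.e.
iff `G` is a connected `2`-regular graph, a cycle.

For the upper bound, `k ↦ g (k + 2)` is superadditive, so `∑ g (d u) ≤ g (L + 2)` where
`L = ∑ (d u - 2)` (truncated) is the number of leaves. The vertices of the cycle are not leaves, so
`L + 2 ≤ n - 1` and `∑ g (d u) ≤ g (n - 1)`, which is the bound. Superadditivity is strict for two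
summands `≥ 1`, so equality forces a single vertex of degree `≥ 3`, which then has degree `n - 1`;
its `n - 1` edges and the one remaining edge form `U_n^3`.
-/

open Finset SimpleGraph

/-- A unicyclic graph: connected with as many edges as vertices. -/
def IsUnicyclic {n : ℕ} (G : SimpleGraph (Fin n)) [DecidableRel G.Adj] : Prop :=
  G.Connected ∧ G.edgeFinset.card = n

/-- The graph `U_n^3`: a triangle on vertices 0,1,2 with n-3 pendant edges attached to 0. -/
def unicyclicStar (n : ℕ) : SimpleGraph (Fin n) :=
  SimpleGraph.fromRel (fun i j => i.val = 0 ∨ (i.val = 1 ∧ j.val = 2))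

def StrictConvexFromOne (g : ℕ → ℝ) : Prop :=
  StrictMonoOn (fun d => g (d + 1) - g d) (Set.Ici 1)

theorem sub_eq_sum_range (g : ℕ → ℝ) (z c : ℕ) :
    g (z + c) - g z = ∑ i ∈ range c, (g (z + (i + 1)) - g (z + i)) := by
  rw [sum_range_sub (fun i => g (z + i)), add_zero]

namespace StrictConvexFromOne

variable {g : ℕ → ℝ}

theorem add_sub_le (hg : StrictConvexFromOne g) {x y : ℕ} (hx : 1 ≤ x) (hxy : x ≤ y) (c : ℕ) :
    g (x + c) - g x ≤ g (y + c) - g y := by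
  rw [sub_eq_sum_range, sub_eq_sum_range]
  exact sum_le_sum fun i _ => hg.monotoneOn (Set.mem_Ici.2 (by omega : 1 ≤ x + i))
    (Set.mem_Ici.2 (by omega : 1 ≤ y + i)) (Nat.add_le_add_right hxy i)

theorem add_sub_lt (hg : StrictConvexFromOne g) {x y c : ℕ} (hx : 1 ≤ x) (hxy : x < y)
    (hc : 0 < c) : g (x + c) - g x < g (y + c) - g y := by
  rw [sub_eq_sum_range, sub_eq_sum_range]
  exact sum_lt_sum_of_nonempty (nonempty_range_iff.2 hc.ne') fun i _ =>
    hg (Set.mem_Ici.2 (by omega : 1 ≤ x + i)) (Set.mem_Ici.2 (by omega : 1 ≤ y + i))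
      (Nat.add_lt_add_right hxy i)

variable (hg : StrictConvexFromOne g) (h1 : g 1 = 0) (h2 : g 2 = 0)
include hg h1 h2

theorem strictMonoOn_Ici_two : StrictMonoOn g (Set.Ici 2) := by
  refine strictMonoOn_of_lt_add_one Set.ordConnected_Ici fun d _ hd _ => ?_
  have hd : 2 ≤ d := hd
  have := hg (Set.mem_Ici.2 le_rfl : 1 ∈ Set.Ici 1) (Set.mem_Ici.2 (by omega) : d ∈ Set.Ici 1)
    (by omega)
  simp only [h1, h2, sub_zero] at this
  linarith

theorem pos_of_three_le {d : ℕ} (hd : 3 ≤ d) : 0 < g d :=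
  h2 ▸ strictMonoOn_Ici_two hg h1 h2 (Set.mem_Ici.2 le_rfl) (Set.mem_Ici.2 (by omega)) (by omega)

theorem nonneg {d : ℕ} (hd : 1 ≤ d) : 0 ≤ g d := by
  rcases (show d = 1 ∨ d = 2 ∨ 3 ≤ d by omega) with rfl | rfl | hd
  exacts [h1.ge, h2.ge, (pos_of_three_le hg h1 h2 hd).le]

theorem eq_zero_iff {d : ℕ} (hd : 1 ≤ d) : g d = 0 ↔ d ≤ 2 := by
  refine ⟨fun h => ?_, fun h => ?_⟩
  · by_contra! h'
    exact (pos_of_three_le hg h1 h2 h').ne' h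
  · rcases (show d = 1 ∨ d = 2 by omega) with rfl | rfl
    exacts [h1, h2]

omit h1 in
theorem add_two_superadditive (a b : ℕ) : g (a + 2) + g (b + 2) ≤ g (a + b + 2) := by
  have := hg.add_sub_le (x := 2) (y := a + 2) (by norm_num) (by omega) b
  rw [h2, show 2 + b = b + 2 by ring, show a + 2 + b = a + b + 2 by ring] at this
  linarith

omit h1 in
theorem add_two_strictSuperadditive {a b : ℕ} (ha : 0 < a) (hb : 0 < b) :
    g (a + 2) + g (b + 2) < g (a + b + 2) := by
  have := hg.add_sub_lt (x := 2) (y := a + 2) (by norm_num) (by omega) hb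
  rw [h2, show 2 + b = b + 2 by ring, show a + 2 + b = a + b + 2 by ring] at this
  linarith

end StrictConvexFromOne

theorem strictConvexFromOne_mul_pow {a : ℝ} (ha : 0 < a) (ha' : a < 1 / 3 ∨ 1 < a) :
    StrictConvexFromOne fun d => d * a ^ d := by
  refine strictMonoOn_of_lt_add_one Set.ordConnected_Ici fun d _ hd _ => ?_
  have hd : (1 : ℝ) ≤ d := by exact_mod_cast (hd : 1 ≤ d)
  have hgap : 0 < (a - 1) * (3 * a - 1) := by
    rcases ha' with h | h
    · exact mul_pos_of_neg_of_neg (by linarith) (by linarith)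
    · exact mul_pos (by linarith) (by linarith)
  have hpos : 0 < a ^ d * (((d : ℝ) - 1) * (a - 1) ^ 2 + (a - 1) * (3 * a - 1)) := by
    have : 0 ≤ ((d : ℝ) - 1) * (a - 1) ^ 2 := mul_nonneg (by linarith) (sq_nonneg _)
    positivity
  have hdiff : ((d + 1 + 1 : ℕ) : ℝ) * a ^ (d + 1 + 1) - ((d + 1 : ℕ) : ℝ) * a ^ (d + 1)
      - (((d + 1 : ℕ) : ℝ) * a ^ (d + 1) - d * a ^ d)
      = a ^ d * (((d : ℝ) - 1) * (a - 1) ^ 2 + (a - 1) * (3 * a - 1)) := by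
    push_cast
    ring
  beta_reduce
  linarith

noncomputable def chordExcess (f : ℕ → ℝ) (d : ℕ) : ℝ :=
  f d - f 1 - ((d : ℝ) - 1) * (f 2 - f 1)

section chordExcess

variable {f : ℕ → ℝ}

@[simp] theorem chordExcess_one : chordExcess f 1 = 0 := by simp [chordExcess]

@[simp] theorem chordExcess_two : chordExcess f 2 = 0 := by norm_num [chordExcess]

theorem StrictConvexFromOne.chordExcess (hf : StrictConvexFromOne f) :
    StrictConvexFromOne (chordExcess f) := by
  intro x hx y hy hxy
  have := hf hx hy hxy
  simp only [_root_.chordExcess]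
  push_cast
  linarith

theorem sum_eq_card_mul_add_sum_chordExcess {ι : Type*} [Fintype ι] (d : ι → ℕ)
    (hd : ∑ u, d u = 2 * Fintype.card ι) :
    ∑ u, f (d u) = Fintype.card ι * f 2 + ∑ u, chordExcess f (d u) := by
  have hd' : ∑ u, (d u : ℝ) = 2 * Fintype.card ι := by exact_mod_cast hd
  simp only [_root_.chordExcess, sum_sub_distrib, ← sum_mul, hd', sum_const, card_univ,
    nsmul_eq_mul]
  ring

theorem chordExcess_sub_one {n : ℕ} (hn : 1 ≤ n) :
    n * f 2 + chordExcess f (n - 1) = f (n - 1) + 2 * f 2 + ((n : ℝ) - 3) * f 1 := by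
  rw [_root_.chordExcess, Nat.cast_sub hn]
  push_cast
  ring

end chordExcess

section DegreeSequence

variable {ι : Type*} [Fintype ι] {d : ι → ℕ}

theorem sum_sub_two_add_card_filter (hd1 : ∀ u, 1 ≤ d u) (hd : ∑ u, d u = 2 * Fintype.card ι) :
    ∑ u, (d u - 2) + #{u | 2 ≤ d u} = Fintype.card ι := by
  have key : ∑ u, ((d u - 2) + (if 2 ≤ d u then 1 else 0) + 1) = ∑ u, d u :=
    sum_congr rfl fun u _ => by have := hd1 u; split_ifs <;> omega
  rw [sum_add_distrib, sum_add_distrib, ← card_filter, sum_const, card_univ, smul_eq_mul,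
    mul_one] at key
  omega

namespace StrictConvexFromOne

variable {g : ℕ → ℝ} (hg : StrictConvexFromOne g) (h1 : g 1 = 0) (h2 : g 2 = 0)
include hg h1 h2

omit [Fintype ι] in
theorem sum_le_sum_sub_two (hd1 : ∀ u, 1 ≤ d u) (s : Finset ι) :
    ∑ u ∈ s, g (d u) ≤ g (∑ u ∈ s, (d u - 2) + 2) := by
  have hshift : ∀ u, g (d u) = g (d u - 2 + 2) := fun u => by
    rcases (show d u = 1 ∨ 2 ≤ d u by have := hd1 u; omega) with h | h
    · rw [h, h1]; exact h2.symm
    · rw [Nat.sub_add_cancel h]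
  have := le_sum_of_subadditive (fun a => -g (a + 2)) (by simp [h2])
    (fun a b => by have := add_two_superadditive hg h2 a b; linarith) s (fun u => d u - 2)
  simp only [sum_neg_distrib, neg_le_neg_iff] at this
  simpa only [← hshift] using this

omit [Fintype ι] in
theorem sum_lt_sum_sub_two [DecidableEq ι] (hd1 : ∀ u, 1 ≤ d u) {s : Finset ι} {u w : ι}
    (hu : u ∈ s) (hw : w ∈ s) (huw : u ≠ w) (hu3 : 3 ≤ d u) (hw3 : 3 ≤ d w) :
    ∑ v ∈ s, g (d v) < g (∑ v ∈ s, (d v - 2) + 2) := by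
  set t := (s.erase u).erase w
  have hw' : w ∈ s.erase u := mem_erase.2 ⟨huw.symm, hw⟩
  have split (F : ι → ℝ) : ∑ v ∈ s, F v = F u + F w + ∑ v ∈ t, F v := by
    rw [← add_sum_erase s F hu, ← add_sum_erase _ F hw', add_assoc]
  have splitℕ : ∑ v ∈ s, (d v - 2) = (d u - 2) + (d w - 2) + ∑ v ∈ t, (d v - 2) := by
    rw [← add_sum_erase s _ hu, ← add_sum_erase _ _ hw', add_assoc]
  have hrest := sum_le_sum_sub_two hg h1 h2 hd1 t
  have hpair := add_two_strictSuperadditive hg h2 (a := d u - 2) (b := d w - 2) (by omega)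
    (by omega)
  have hjoin := add_two_superadditive hg h2 (d u - 2 + (d w - 2)) (∑ v ∈ t, (d v - 2))
  rw [Nat.sub_add_cancel (by omega : 2 ≤ d u), Nat.sub_add_cancel (by omega : 2 ≤ d w)] at hpair
  rw [split, splitℕ]
  linarith

variable (hd1 : ∀ u, 1 ≤ d u) (hd : ∑ u, d u = 2 * Fintype.card ι)
include hd1 hd

theorem sum_eq_zero_iff : ∑ u, g (d u) = 0 ↔ ∀ u, d u = 2 := by
  rw [sum_eq_zero_iff_of_nonneg fun u _ => nonneg hg h1 h2 (hd1 u)]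
  refine ⟨fun h => ?_, fun h u _ => by rw [h u, h2]⟩
  have hle : ∀ u, d u ≤ 2 := fun u => (eq_zero_iff hg h1 h2 (hd1 u)).1 (h u (mem_univ u))
  have := (sum_eq_sum_iff_of_le (s := univ) fun u _ => hle u).1 (by simp [hd, mul_comm])
  exact fun u => this u (mem_univ u)

variable (hK : 3 ≤ #{u | 2 ≤ d u})
include hK

theorem sum_le_card_sub_one : ∑ u, g (d u) ≤ g (Fintype.card ι - 1) := by
  have hcount := sum_sub_two_add_card_filter hd1 hd
  refine (sum_le_sum_sub_two hg h1 h2 hd1 univ).trans ?_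
  exact (strictMonoOn_Ici_two hg h1 h2).monotoneOn (Set.mem_Ici.2 (by omega))
    (Set.mem_Ici.2 (by omega)) (by omega)

theorem exists_eq_card_sub_one (heq : ∑ u, g (d u) = g (Fintype.card ι - 1)) :
    ∃ u, d u = Fintype.card ι - 1 := by
  classical
  have hcount := sum_sub_two_add_card_filter hd1 hd
  obtain ⟨w, hw⟩ : ∃ w, 2 ≤ d w := by
    obtain ⟨w, hw⟩ := card_pos.1 (by omega : 0 < #{u | 2 ≤ d u})
    exact ⟨w, (mem_filter.1 hw).2⟩
  have : Nonempty ι := ⟨w⟩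
  -- a second value `≥ 3` besides the maximal one would make the superadditive bound strict
  obtain ⟨u, hu⟩ := Finite.exists_max d
  have hmono := strictMonoOn_Ici_two hg h1 h2
  have hrest : ∀ v ≠ u, d v ≤ 2 := by
    intro v hvu
    by_contra! hv
    have := sum_lt_sum_sub_two hg h1 h2 hd1 (mem_univ u) (mem_univ v) hvu.symm
      (by have := hu v; omega) hv
    have := hmono.monotoneOn (Set.mem_Ici.2 (by omega)) (Set.mem_Ici.2 (by omega))
      (by omega : ∑ v, (d v - 2) + 2 ≤ Fintype.card ι - 1)
    linarith
  have hsum : ∑ v, (d v - 2) = d u - 2 := by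
    rw [← add_sum_erase univ _ (mem_univ u), sum_eq_zero fun v hv => ?_, add_zero]
    have := hrest v (ne_of_mem_erase hv)
    omega
  have htight : ∑ v, (d v - 2) + 2 = Fintype.card ι - 1 := by
    by_contra hne
    have := hmono (Set.mem_Ici.2 (by omega)) (Set.mem_Ici.2 (by omega))
      (by omega : ∑ v, (d v - 2) + 2 < Fintype.card ι - 1)
    linarith [sum_le_sum_sub_two hg h1 h2 hd1 univ]
  exact ⟨u, by have := hu w; omega⟩

end StrictConvexFromOne

end DegreeSequence

namespace SimpleGraph

variable {V W : Type*} [Fintype V] [Fintype W] {G : SimpleGraph V} {H : SimpleGraph W}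
  [DecidableRel G.Adj] [DecidableRel H.Adj]

theorem Hom.adj_iff_of_bijective [DecidableEq W] (f : G →g H) (hf : Function.Bijective f)
    (hcard : #H.edgeFinset ≤ #G.edgeFinset) {a b : V} : H.Adj (f a) (f b) ↔ G.Adj a b := by
  refine ⟨fun hab => ?_, f.map_adj⟩
  have himage : G.edgeFinset.image (Sym2.map f) = H.edgeFinset := by
    refine eq_of_subset_of_card_le (fun e he => ?_) ?_
    · obtain ⟨e, he', rfl⟩ := mem_image.1 he
      induction e using Sym2.ind with
      | _ x y => exact mem_edgeFinset.2 (f.map_adj ((G.mem_edgeSet).1 (mem_edgeFinset.1 he')))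
    · rwa [card_image_of_injective _ (Sym2.map.injective hf.1)]
  obtain ⟨e, he, hfe⟩ := mem_image.1 (himage ▸ mem_edgeFinset.2 hab : s(f a, f b) ∈ _)
  rw [show s(f a, f b) = Sym2.map f s(a, b) from rfl] at hfe
  rw [Sym2.map.injective hf.1 hfe] at he
  exact mem_edgeFinset.1 he

noncomputable def Hom.isoOfBijective [DecidableEq W] (f : G →g H) (hf : Function.Bijective f)
    (hcard : #H.edgeFinset ≤ #G.edgeFinset) : G ≃g H where
  toEquiv := Equiv.ofBijective f hf
  map_rel_iff' := f.adj_iff_of_bijective hf hcard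

theorem Iso.sum_comp_degree {M : Type*} [AddCommMonoid M] (e : G ≃g H) (φ : ℕ → M) :
    ∑ w, φ (H.degree w) = ∑ v, φ (G.degree v) :=
  Fintype.sum_equiv e.toEquiv.symm _ _ fun w => by
    rw [← e.degree_eq, show e (e.toEquiv.symm w) = w from e.apply_symm_apply w]

theorem Walk.IsCycle.two_le_degree {u v : V} {p : G.Walk v v} (hp : p.IsCycle)
    (hu : u ∈ p.support) : 2 ≤ G.degree u := by
  rw [← hp.ncard_neighborSet_toSubgraph_eq_two hu, ← card_neighborFinset_eq_degree,
    ← Set.ncard_coe_finset, coe_neighborFinset]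
  exact Set.ncard_le_ncard (p.toSubgraph.neighborSet_subset u)

theorem Walk.IsCycle.three_le_card_filter_two_le_degree [DecidableEq V] {v : V}
    {p : G.Walk v v} (hp : p.IsCycle) : 3 ≤ #{u | 2 ≤ G.degree u} := by
  have hsub : p.support.tail.toFinset ⊆ ({u | 2 ≤ G.degree u} : Finset V) := fun u hu =>
    mem_filter.2 ⟨mem_univ u, hp.two_le_degree (List.mem_of_mem_tail (List.mem_toFinset.1 hu))⟩
  have hcard : #p.support.tail.toFinset = p.length := by
    rw [List.toFinset_card_of_nodup hp.support_nodup, List.length_tail, length_support,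
      Nat.add_sub_cancel]
  exact hp.three_le_length.trans (hcard ▸ card_le_card hsub)

theorem IsCycles.of_degree_eq_two (hreg : ∀ v, G.degree v = 2) : G.IsCycles := fun v _ => by
  classical
  rw [← hreg v, ← card_neighborFinset_eq_degree, ← Set.ncard_coe_finset, coe_neighborFinset]

theorem Connected.exists_isHamiltonianCycle_of_degree_eq_two [DecidableEq V] (hconn : G.Connected)
    (hreg : ∀ v, G.degree v = 2) (v : V) : ∃ p : G.Walk v v, p.IsHamiltonianCycle := by
  have hnb : (G.neighborSet v).Nonempty := by
    rw [← coe_neighborFinset, coe_nonempty, ← card_pos, card_neighborFinset_eq_degree, hreg]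
    norm_num
  obtain ⟨p, hp, hverts⟩ :=
    (IsCycles.of_degree_eq_two hreg).exists_cycle_toSubgraph_verts_eq_connectedComponentSupp
      (c := G.connectedComponentMk v) rfl hnb
  refine ⟨p, Walk.isHamiltonianCycle_iff_isCycle_and_support_count_tail_eq_one.2
    ⟨hp, fun a => List.count_eq_one_of_mem hp.support_nodup ?_⟩⟩
  have ha : a ∈ p.support := by
    rw [← Walk.mem_verts_toSubgraph, hverts, ConnectedComponent.mem_supp_iff,
      ConnectedComponent.eq]
    exact hconn.preconnected a v
  rw [← Walk.cons_tail_support] at ha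
  rcases List.mem_cons.1 ha with rfl | ha
  exacts [Walk.end_mem_tail_support hp.not_nil, ha]

theorem cycleGraph_degree {n : ℕ} (hn : 3 ≤ n) (v : Fin n) : (cycleGraph n).degree v = 2 := by
  obtain ⟨m, rfl⟩ : ∃ m, n = m + 3 := ⟨n - 3, by omega⟩
  exact cycleGraph_degree_three_le

theorem Connected.nonempty_iso_cycleGraph (hconn : G.Connected) (hreg : ∀ v, G.degree v = 2) :
    Nonempty (G ≃g cycleGraph (Fintype.card V)) := by
  classical
  obtain ⟨v⟩ := hconn.nonempty
  obtain ⟨p, hp⟩ := hconn.exists_isHamiltonianCycle_of_degree_eq_two hreg v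
  have hlen := hp.length_eq
  have h3 : 3 ≤ Fintype.card V := hlen ▸ hp.isCycle.three_le_length
  obtain ⟨f⟩ := (cycleGraph_isContained_iff h3).2 ⟨v, p, hp.isCycle, hlen⟩
  have hf : Function.Bijective f :=
    (Fintype.bijective_iff_injective_and_card f).2 ⟨f.injective, by simp⟩
  have hcard : #G.edgeFinset ≤ #(cycleGraph (Fintype.card V)).edgeFinset := by
    have hG := G.sum_degrees_eq_twice_card_edges
    have hC := (cycleGraph (Fintype.card V)).sum_degrees_eq_twice_card_edges
    simp only [hreg, cycleGraph_degree h3, sum_const, card_univ, Fintype.card_fin,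
      smul_eq_mul] at hG hC
    omega
  exact ⟨(f.toHom.isoOfBijective hf hcard).symm⟩

end SimpleGraph

section unicyclicStar

variable {n : ℕ}

theorem unicyclicStar_adj {i j : Fin n} : (unicyclicStar n).Adj i j ↔
    i ≠ j ∧ (i.val = 0 ∨ j.val = 0 ∨ (i.val = 1 ∧ j.val = 2) ∨ (i.val = 2 ∧ j.val = 1)) := by
  rw [unicyclicStar, fromRel_adj]
  tauto

instance : DecidableRel (unicyclicStar n).Adj := fun _ _ =>
  decidable_of_iff _ unicyclicStar_adj.symm

theorem unicyclicStar_degree (hn : 3 ≤ n) (u : Fin n) :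
    (unicyclicStar n).degree u = if u.val = 0 then n - 1 else if u.val ≤ 2 then 2 else 1 := by
  rw [← card_neighborFinset_eq_degree]
  have hnb (s : Finset (Fin n)) (hs : ∀ w, w ∈ s ↔ (unicyclicStar n).Adj u w) :
      (unicyclicStar n).neighborFinset u = s := by
    ext w
    rw [mem_neighborFinset, hs]
  let z (k : ℕ) (hk : k < n) : Fin n := ⟨k, hk⟩
  split_ifs with h0 h2
  · rw [((unicyclicStar n).neighborFinset_eq_erase_univ u).2 fun w huw =>
      unicyclicStar_adj.2 ⟨huw, Or.inl h0⟩, card_erase_of_mem (mem_univ u), card_univ,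
      Fintype.card_fin]
  · rcases (show u.val = 1 ∨ u.val = 2 by omega) with h | h
    · rw [hnb {z 0 (by omega), z 2 (by omega)} fun w => by
        simp [z, unicyclicStar_adj, Fin.ext_iff]; omega]
      exact card_pair (by simp [z, Fin.ext_iff])
    · rw [hnb {z 0 (by omega), z 1 (by omega)} fun w => by
        simp [z, unicyclicStar_adj, Fin.ext_iff]; omega]
      exact card_pair (by simp [z, Fin.ext_iff])
  · rw [hnb {z 0 (by omega)} fun w => by simp [z, unicyclicStar_adj, Fin.ext_iff]; omega]
    exact card_singleton _

theorem sum_unicyclicStar_degree {M : Type*} [AddCommMonoid M] (hn : 3 ≤ n) (φ : ℕ → M) :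
    ∑ u, φ ((unicyclicStar n).degree u) = φ (n - 1) + 2 • φ 2 + (n - 3) • φ 1 := by
  obtain ⟨m, rfl⟩ : ∃ m, n = m + 3 := ⟨n - 3, by omega⟩
  simp [unicyclicStar_degree hn, Fin.sum_univ_succ, two_nsmul, add_assoc]

theorem card_edgeFinset_unicyclicStar (hn : 3 ≤ n) : #(unicyclicStar n).edgeFinset = n := by
  have hsum := (unicyclicStar n).sum_degrees_eq_twice_card_edges
  have hdeg := sum_unicyclicStar_degree hn (fun d => d)
  simp only [smul_eq_mul] at hdeg
  omega

theorem nonempty_iso_unicyclicStar (hn : 3 ≤ n) {G : SimpleGraph (Fin n)} [DecidableRel G.Adj]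
    (hE : #G.edgeFinset = n) {v : Fin n} (hv : G.degree v = n - 1) :
    Nonempty (G ≃g unicyclicStar n) := by
  have hvU : G.IsUniversal v := (G.degree_eq_card_sub_one v).1 (by rwa [Fintype.card_fin])
  obtain ⟨e, he, hev⟩ := exists_mem_notMem_of_card_lt_card (s := G.incidenceFinset v)
    (t := G.edgeFinset) (by rw [card_incidenceFinset_eq_degree, hv, hE]; omega)
  induction e using Sym2.ind with | _ x y => ?_
  have hxy : G.Adj x y := (G.mem_edgeSet).1 (mem_edgeFinset.1 he)
  have hxv : x ≠ v := by rintro rfl; exact hev (by simp [mem_incidenceFinset, incidenceSet, hxy])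
  have hyv : y ≠ v := by rintro rfl; exact hev (by simp [mem_incidenceFinset, incidenceSet, hxy])
  obtain ⟨σ, hσ⟩ := Equiv.Perm.exists_extending_pair (fun i : Fin 3 => (⟨i, by omega⟩ : Fin n))
    ![v, x, y] (fun i j h => Fin.ext (Fin.mk.inj h)) (by
      intro i j h
      fin_cases i <;> fin_cases j <;> simp_all [eq_comm, hxy.ne])
  have hσv (i : Fin n) (hi : i.val = 0) : σ i = v := by
    rw [show i = ⟨0, by omega⟩ from Fin.ext hi]; exact hσ 0
  have hσx (i : Fin n) (hi : i.val = 1) : σ i = x := by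
    rw [show i = ⟨1, by omega⟩ from Fin.ext hi]; exact hσ 1
  have hσy (i : Fin n) (hi : i.val = 2) : σ i = y := by
    rw [show i = ⟨2, by omega⟩ from Fin.ext hi]; exact hσ 2
  let φ : unicyclicStar n →g G := ⟨σ, fun {i j} hij => by
    obtain ⟨hne, h | h | ⟨hi, hj⟩ | ⟨hi, hj⟩⟩ := unicyclicStar_adj.1 hij
    · rw [hσv i h]
      exact hvU (hσv i h ▸ σ.injective.ne hne)
    · rw [hσv j h]
      exact (hvU (hσv j h ▸ σ.injective.ne hne.symm)).symm
    · rw [hσx i hi, hσy j hj]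
      exact hxy
    · rw [hσy i hi, hσx j hj]
      exact hxy.symm⟩
  exact ⟨(φ.isoOfBijective σ.bijective (by rw [hE, card_edgeFinset_unicyclicStar hn])).symm⟩

end unicyclicStar

namespace IsUnicyclic

variable {n : ℕ} {G : SimpleGraph (Fin n)} [DecidableRel G.Adj]

theorem sum_degrees (hG : IsUnicyclic G) : ∑ u, G.degree u = 2 * n := by
  rw [sum_degrees_eq_twice_card_edges, hG.2]

theorem one_le_degree (hG : IsUnicyclic G) (hn : 2 ≤ n) (u : Fin n) : 1 ≤ G.degree u :=
  haveI := Fin.nontrivial_iff_two_le.2 hn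
  hG.1.preconnected.degree_pos_of_nontrivial u

theorem three_le_card_filter_two_le_degree (hG : IsUnicyclic G) :
    3 ≤ #{u | 2 ≤ G.degree u} := by
  have hcyc : ¬ G.IsAcyclic := fun hacyc => by
    have := (IsTree.card_edgeFinset ⟨hG.1, hacyc⟩)
    rw [hG.2, Fintype.card_fin] at this
    omega
  simp only [IsAcyclic, not_forall, not_not] at hcyc
  obtain ⟨v, p, hp⟩ := hcyc
  exact hp.three_le_card_filter_two_le_degree

variable {f : ℕ → ℝ} (hf : StrictConvexFromOne f) (hG : IsUnicyclic G) (hn : 3 ≤ n)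
include hf hG hn

theorem card_mul_le_sum_degree : n * f 2 ≤ ∑ u, f (G.degree u) := by
  rw [sum_eq_card_mul_add_sum_chordExcess _ (by simpa using hG.sum_degrees), Fintype.card_fin]
  have := sum_nonneg fun u (_ : u ∈ univ) =>
    hf.chordExcess.nonneg chordExcess_one chordExcess_two (hG.one_le_degree (by omega) u)
  linarith

theorem sum_degree_eq_card_mul_iff :
    ∑ u, f (G.degree u) = n * f 2 ↔ Nonempty (G ≃g cycleGraph n) := by
  rw [sum_eq_card_mul_add_sum_chordExcess _ (by simpa using hG.sum_degrees), Fintype.card_fin,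
    add_eq_left, hf.chordExcess.sum_eq_zero_iff chordExcess_one chordExcess_two
      (hG.one_le_degree (by omega)) (by simpa using hG.sum_degrees)]
  refine ⟨fun hreg => ?_, fun ⟨e⟩ u => ?_⟩
  · have := hG.1.nonempty_iso_cycleGraph hreg
    rwa [Fintype.card_fin] at this
  · rw [← e.degree_eq, cycleGraph_degree hn]

theorem sum_degree_le :
    ∑ u, f (G.degree u) ≤ f (n - 1) + 2 * f 2 + ((n : ℝ) - 3) * f 1 := by
  rw [sum_eq_card_mul_add_sum_chordExcess _ (by simpa using hG.sum_degrees), Fintype.card_fin,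
    ← chordExcess_sub_one (by omega)]
  have := hf.chordExcess.sum_le_card_sub_one chordExcess_one chordExcess_two
    (hG.one_le_degree (by omega)) (by simpa using hG.sum_degrees)
    (by simpa using hG.three_le_card_filter_two_le_degree)
  rw [Fintype.card_fin] at this
  linarith

theorem sum_degree_eq_iff :
    ∑ u, f (G.degree u) = f (n - 1) + 2 * f 2 + ((n : ℝ) - 3) * f 1 ↔
      Nonempty (G ≃g unicyclicStar n) := by
  refine ⟨fun heq => ?_, fun ⟨e⟩ => ?_⟩
  · rw [sum_eq_card_mul_add_sum_chordExcess _ (by simpa using hG.sum_degrees), Fintype.card_fin,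
      ← chordExcess_sub_one (by omega), add_right_inj] at heq
    obtain ⟨v, hv⟩ := hf.chordExcess.exists_eq_card_sub_one chordExcess_one chordExcess_two
      (hG.one_le_degree (by omega)) (by simpa using hG.sum_degrees)
      (by simpa using hG.three_le_card_filter_two_le_degree) (by simpa using heq)
    exact nonempty_iso_unicyclicStar hn hG.2 (v := v) (by simpa using hv)
  · rw [← e.sum_comp_degree, sum_unicyclicStar_degree hn, two_nsmul, nsmul_eq_mul,
      Nat.cast_sub (by omega)]
    push_cast
    ring

end IsUnicyclic

theorem stmt10 {n : ℕ} (hn : 4 ≤ n) (G : SimpleGraph (Fin n)) [DecidableRel G.Adj]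
    (hG : IsUnicyclic G) (a : ℝ) (ha : 1 < a ∨ (0 < a ∧ a ≤ Real.exp (-2))) :
    (2 * (n : ℝ) * a ^ 2 ≤ ∑ u : Fin n, (G.degree u : ℝ) * a ^ (G.degree u)) ∧
    (∑ u : Fin n, (G.degree u : ℝ) * a ^ (G.degree u) ≤
      ((n : ℝ) - 1) * a ^ (n - 1) + 4 * a ^ 2 + ((n : ℝ) - 3) * a) ∧
    ((∑ u : Fin n, (G.degree u : ℝ) * a ^ (G.degree u) = 2 * (n : ℝ) * a ^ 2) ↔
      Nonempty (G ≃g SimpleGraph.cycleGraph n)) ∧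
    ((∑ u : Fin n, (G.degree u : ℝ) * a ^ (G.degree u) =
        ((n : ℝ) - 1) * a ^ (n - 1) + 4 * a ^ 2 + ((n : ℝ) - 3) * a) ↔
      Nonempty (G ≃g unicyclicStar n)) := by
  have hexp : Real.exp (-2) < 1 / 3 := by
    rw [Real.exp_neg, inv_lt_comm₀ (Real.exp_pos 2) (by norm_num)]
    linarith [Real.add_one_lt_exp (show (2 : ℝ) ≠ 0 by norm_num)]
  have hf : StrictConvexFromOne fun d => d * a ^ d := by
    rcases ha with ha | ⟨ha, ha'⟩
    exacts [strictConvexFromOne_mul_pow (by linarith) (Or.inr ha),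
      strictConvexFromOne_mul_pow ha (Or.inl (ha'.trans_lt hexp))]
  have hlower : (n : ℝ) * ((2 : ℕ) * a ^ 2) = 2 * n * a ^ 2 := by push_cast; ring
  have hupper : ((n - 1 : ℕ) : ℝ) * a ^ (n - 1) + 2 * ((2 : ℕ) * a ^ 2)
      + ((n : ℝ) - 3) * ((1 : ℕ) * a ^ 1)
      = ((n : ℝ) - 1) * a ^ (n - 1) + 4 * a ^ 2 + ((n : ℝ) - 3) * a := by
    rw [Nat.cast_sub (by omega)]
    push_cast
    ring
  have hn3 : 3 ≤ n := by omega
  rw [← hlower, ← hupper]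
  exact ⟨hG.card_mul_le_sum_degree hf hn3, hG.sum_degree_le hf hn3,
    hG.sum_degree_eq_card_mul_iff hf hn3, hG.sum_degree_eq_iff hf hn3⟩
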